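/- Let m > 0, l > 0, c > 0, b > 0 and let P be real. All complex roots of the characteristic polynomial 2m²l⁴λ⁴ + 7bml²λ³ + (b² + ml²(7c − 2Pl))λ² + 2bcλ + c² of the damped Ziegler pendulum have negative real part if and only if P < 41c/(28l) + b²/(2ml³). Thus the critical follower load of the damped pendulum is P_k(b) = 41c/(28l) + b²/(2ml³), whose limit 41c/(28l) as b → 0 is strictly smaller than the undamped critical load (7/2 − √2)c/l (Ziegler's paradox). -/

import Mathlib

open Polynomial in
lemma cubic_root' (b2 b1 b0 : ℂ) : ∃ z : ℂ, z^3 + b2*z^2 + b1*z + b0 = 0 := by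
  obtain ⟨z, hz⟩ := Complex.exists_root (f := C 1 * X^3 + C b2 * X^2 + C b1 * X + C b0)
    (by rw [degree_cubic one_ne_zero]; norm_num)
  exact ⟨z, by simpa [Polynomial.IsRoot] using hz⟩

open Polynomial in
lemma quartic_root' (a3 a2 a1 a0 : ℂ) : ∃ z : ℂ, z^4 + a3*z^3 + a2*z^2 + a1*z + a0 = 0 := by
  obtain ⟨z, hz⟩ := Complex.exists_root (f := X^4 + (C a3 * X^3 + C a2 * X^2 + C a1 * X + C a0))
    (by
      rw [degree_add_eq_left_of_degree_lt]
      · rw [degree_X_pow]; norm_num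
      · rw [degree_X_pow]; exact degree_cubic_lt)
  refine ⟨z, ?_⟩
  have := hz
  simp [Polynomial.IsRoot] at this
  linear_combination this

lemma self_quad (z : ℂ) :
    z^2 - 2*(z.re:ℂ)*z + ((z.re^2 + z.im^2 : ℝ):ℂ) = 0 := by
  have h1 : z + (starRingEnd ℂ) z = ((2*z.re : ℝ):ℂ) := Complex.add_conj z
  have h2 : z * (starRingEnd ℂ) z = ((z.re^2 + z.im^2 : ℝ):ℂ) := by
    rw [Complex.mul_conj]
    norm_cast
    simp [Complex.normSq_apply]; ring
  push_cast at h1 h2 ⊢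
  linear_combination z * h1 - h2


lemma quad_stable (r s : ℝ) (h : ∀ z : ℂ, z^2 + (r:ℂ)*z + (s:ℂ) = 0 → z.re < 0) :
    0 < r ∧ 0 < s := by
  rcases le_or_gt 0 (r^2 - 4*s) with hd | hd
  · set e := Real.sqrt (r^2 - 4*s) with he
    have he2 : e^2 = r^2 - 4*s := Real.sq_sqrt hd
    have he0 : 0 ≤ e := Real.sqrt_nonneg _
    have he2c : ((e:ℝ):ℂ)^2 = ((r:ℝ):ℂ)^2 - 4*((s:ℝ):ℂ) := by exact_mod_cast he2
    have h1 : ((-r+e)/2 : ℝ) < 0 := by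
      have := h (((-r+e)/2 : ℝ) : ℂ) (by push_cast; linear_combination he2c/4)
      simpa using this
    have h2 : ((-r-e)/2 : ℝ) < 0 := by
      have := h (((-r-e)/2 : ℝ) : ℂ) (by push_cast; linear_combination he2c/4)
      simpa using this
    constructor
    · linarith
    · nlinarith
  · have hs4 : 0 < 4*s - r^2 := by linarith
    set e := Real.sqrt (4*s - r^2) with he
    have he2 : e^2 = 4*s - r^2 := Real.sq_sqrt hs4.le
    have he0 : 0 < e := Real.sqrt_pos.2 hs4
    have hroot : (⟨-r/2, e/2⟩ : ℂ)^2 + (r:ℂ)*(⟨-r/2, e/2⟩ : ℂ) + (s:ℂ) = 0 := by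
      rw [Complex.ext_iff]
      constructor
      · simp [pow_two, Complex.mul_re, Complex.mul_im, Complex.add_re]
        nlinarith [he2]
      · simp [pow_two, Complex.mul_re, Complex.mul_im, Complex.add_im]
        ring
    have := h _ hroot
    simp at this
    constructor
    · linarith
    · nlinarith

lemma hurwitz_of_factor (p q r s a b c d : ℝ)
    (hp : 0 < p) (hq : 0 < q) (hr : 0 < r) (hs : 0 < s)
    (ha : a = p + r) (hb : b = q + s + p*r) (hc : c = p*s + q*r) (hd : d = q*s) :
    c^2 + a^2*d < a*b*c := by
  subst ha hb hc hd
  nlinarith [mul_pos (mul_pos hp hr)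
    (add_pos_of_nonneg_of_pos (sq_nonneg (q - s))
      (mul_pos (add_pos hp hr) (add_pos (mul_pos hp hs) (mul_pos hq hr))))]

lemma coeff_ext (a b c d p q r s : ℝ)
    (h : ∀ w : ℂ, w^4 + (a:ℂ)*w^3 + (b:ℂ)*w^2 + (c:ℂ)*w + (d:ℂ)
        = (w^2 + (p:ℂ)*w + (q:ℂ)) * (w^2 + (r:ℂ)*w + (s:ℂ))) :
    a = p + r ∧ b = q + s + p*r ∧ c = p*s + q*r ∧ d = q*s := by
  have hd : (d:ℂ) = (q:ℂ)*(s:ℂ) := by linear_combination h 0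
  have ha : (a:ℂ) = (p:ℂ) + (r:ℂ) := by
    linear_combination (-(1:ℂ)/6) * h 1 + ((1:ℂ)/6) * h (-1) + ((1:ℂ)/12) * h 2
      - ((1:ℂ)/12) * h (-2)
  have hb : (b:ℂ) = (q:ℂ) + (s:ℂ) + (p:ℂ)*(r:ℂ) := by
    linear_combination ((1:ℂ)/2) * h 1 + ((1:ℂ)/2) * h (-1) - h 0
  have hc : (c:ℂ) = (p:ℂ)*(s:ℂ) + (q:ℂ)*(r:ℂ) := by
    linear_combination ((2:ℂ)/3) * h 1 - ((2:ℂ)/3) * h (-1) - ((1:ℂ)/12) * h 2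
      + ((1:ℂ)/12) * h (-2)
  exact ⟨by exact_mod_cast ha, by exact_mod_cast hb, by exact_mod_cast hc, by exact_mod_cast hd⟩


lemma lin_zero (e f : ℝ) (z : ℂ) (him : z.im ≠ 0) (h : (e:ℂ)*z + (f:ℂ) = 0) :
    e = 0 ∧ f = 0 := by
  have hIm := congrArg Complex.im h
  simp [Complex.add_im, Complex.mul_im] at hIm
  have he : e = 0 := by
    rcases hIm with h' | h'
    · exact h'
    · exact absurd h' him
  refine ⟨he, ?_⟩
  have hRe := congrArg Complex.re h
  simp [Complex.add_re, Complex.mul_re, he] at hRe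
  exact hRe

set_option maxHeartbeats 1000000 in
lemma quartic_stable_iff (a b c d : ℝ) (ha : 0 < a) (hc : 0 < c) (hd : 0 < d) :
    (∀ z : ℂ, z^4 + (a:ℂ)*z^3 + (b:ℂ)*z^2 + (c:ℂ)*z + (d:ℂ) = 0 → z.re < 0) ↔
      c^2 + a^2*d < a*b*c := by
  constructor
  · -- forward: stability implies Hurwitz inequality
    intro hstab
    obtain ⟨z₁, hz₁⟩ := quartic_root' (a:ℂ) (b:ℂ) (c:ℂ) (d:ℂ)
    have hx₁ : z₁.re < 0 := hstab z₁ hz₁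
    by_cases him1 : z₁.im = 0
    · -- z₁ is a real root x₁ < 0
      have hz₁' : z₁ = ((z₁.re : ℝ) : ℂ) := Complex.ext rfl (by simp [him1])
      set x₁ := z₁.re with hx₁def
      have hre : x₁^4 + a*x₁^3 + b*x₁^2 + c*x₁ + d = 0 := by
        have := hz₁
        rw [hz₁'] at this
        exact_mod_cast this
      have hrec : ((x₁^4 + a*x₁^3 + b*x₁^2 + c*x₁ + d : ℝ) : ℂ) = 0 := by
        exact_mod_cast hre
      -- split off the linear factor
      have hsplit : ∀ w : ℂ, w^4 + (a:ℂ)*w^3 + (b:ℂ)*w^2 + (c:ℂ)*w + (d:ℂ)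
          = (w - (x₁:ℂ)) * (w^3 + ((a+x₁ : ℝ):ℂ)*w^2 + ((b+a*x₁+x₁^2 : ℝ):ℂ)*w
              + ((c+b*x₁+a*x₁^2+x₁^3 : ℝ):ℂ)) := by
        intro w
        linear_combination (norm := (push_cast; ring1)) hrec
      obtain ⟨z₂, hz₂⟩ := cubic_root' ((a+x₁ : ℝ):ℂ) ((b+a*x₁+x₁^2 : ℝ):ℂ)
        ((c+b*x₁+a*x₁^2+x₁^3 : ℝ):ℂ)
      have hz₂root : z₂^4 + (a:ℂ)*z₂^3 + (b:ℂ)*z₂^2 + (c:ℂ)*z₂ + (d:ℂ) = 0 := by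
        rw [hsplit z₂, hz₂, mul_zero]
      have hx₂ : z₂.re < 0 := hstab z₂ hz₂root
      by_cases him2 : z₂.im = 0
      · -- second real root x₂ < 0
        have hz₂' : z₂ = ((z₂.re : ℝ) : ℂ) := Complex.ext rfl (by simp [him2])
        set x₂ := z₂.re with hx₂def
        have hre2 : x₂^3 + (a+x₁)*x₂^2 + (b+a*x₁+x₁^2)*x₂ + (c+b*x₁+a*x₁^2+x₁^3) = 0 := by
          have := hz₂
          rw [hz₂'] at this
          exact_mod_cast this
        have hre2c : ((x₂^3 + (a+x₁)*x₂^2 + (b+a*x₁+x₁^2)*x₂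
            + (c+b*x₁+a*x₁^2+x₁^3) : ℝ) : ℂ) = 0 := by exact_mod_cast hre2
        have hfact : ∀ w : ℂ, w^4 + (a:ℂ)*w^3 + (b:ℂ)*w^2 + (c:ℂ)*w + (d:ℂ)
            = (w^2 + ((-(x₁+x₂) : ℝ):ℂ)*w + ((x₁*x₂ : ℝ):ℂ))
              * (w^2 + (((a+x₁)+x₂ : ℝ):ℂ)*w
                + (((b+a*x₁+x₁^2) + ((a+x₁)+x₂)*x₂ : ℝ):ℂ)) := by
          intro w
          rw [hsplit w]
          linear_combination (norm := (push_cast; ring1)) (w - (x₁:ℂ)) * hre2c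
        have hqs := quad_stable ((a+x₁)+x₂) ((b+a*x₁+x₁^2) + ((a+x₁)+x₂)*x₂) (by
          intro w hw
          apply hstab
          rw [hfact w, hw, mul_zero])
        obtain ⟨h1, h2, h3, h4⟩ := coeff_ext a b c d (-(x₁+x₂)) (x₁*x₂) _ _ hfact
        exact hurwitz_of_factor (-(x₁+x₂)) (x₁*x₂) _ _ a b c d
          (by nlinarith) (by nlinarith) hqs.1 hqs.2 h1 h2 h3 h4
      · -- z₂ nonreal: conjugate pair from cubic plus two real linear factors
        set x₂ := z₂.re with hx₂def
        set y₂ := z₂.im with hy₂def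
        have hquad2 : z₂^2 + ((-2*x₂ : ℝ):ℂ)*z₂ + ((x₂^2+y₂^2 : ℝ):ℂ) = 0 := by
          have := self_quad z₂
          push_cast at this ⊢
          linear_combination this
        set w₀ : ℝ := (a+x₁) + 2*x₂ with hw₀def
        have hw₀c : (w₀:ℂ) = (a:ℂ) + (x₁:ℂ) + 2*(x₂:ℂ) := by
          rw [hw₀def]; push_cast; ring
        have hrem : (((b+a*x₁+x₁^2) - (x₂^2+y₂^2) + 2*x₂*w₀ : ℝ):ℂ)*z₂
            + (((c+b*x₁+a*x₁^2+x₁^3) - (x₂^2+y₂^2)*w₀ : ℝ):ℂ) = 0 := by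
          linear_combination (norm := (push_cast; ring1)) hz₂ - (z₂ + (w₀:ℂ)) * hquad2
            + z₂^2 * hw₀c
        obtain ⟨hE0, hF0⟩ := lin_zero _ _ z₂ him2 hrem
        have hE0c : (((b+a*x₁+x₁^2) - (x₂^2+y₂^2) + 2*x₂*w₀ : ℝ):ℂ) = 0 := by
          exact_mod_cast hE0
        have hF0c : (((c+b*x₁+a*x₁^2+x₁^3) - (x₂^2+y₂^2)*w₀ : ℝ):ℂ) = 0 := by
          exact_mod_cast hF0
        have hfact : ∀ w : ℂ, w^4 + (a:ℂ)*w^3 + (b:ℂ)*w^2 + (c:ℂ)*w + (d:ℂ)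
            = (w^2 + ((w₀ - x₁ : ℝ):ℂ)*w + ((-(x₁*w₀) : ℝ):ℂ))
              * (w^2 + ((-2*x₂ : ℝ):ℂ)*w + ((x₂^2+y₂^2 : ℝ):ℂ)) := by
          intro w
          rw [hsplit w]
          linear_combination (norm := (push_cast; ring1))
            (w - (x₁:ℂ)) * w * hE0c + (w - (x₁:ℂ)) * hF0c
              + ((x₁:ℂ)*w^2 - w^3) * hw₀c
        -- -w₀ is a real root, hence positive
        have hw₀pos : 0 < w₀ := by
          have hroot : ((-w₀ : ℝ):ℂ)^4 + (a:ℂ)*((-w₀ : ℝ):ℂ)^3 + (b:ℂ)*((-w₀ : ℝ):ℂ)^2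
              + (c:ℂ)*((-w₀ : ℝ):ℂ) + (d:ℂ) = 0 := by
            rw [hfact ((-w₀ : ℝ):ℂ)]
            have : (((-w₀ : ℝ):ℂ)^2 + ((w₀ - x₁ : ℝ):ℂ)*((-w₀ : ℝ):ℂ) + ((-(x₁*w₀) : ℝ):ℂ)) = 0 := by
              push_cast; ring
            rw [this, zero_mul]
          have := hstab _ hroot
          simpa using this
        have hv₂pos : 0 < x₂^2 + y₂^2 := by positivity
        obtain ⟨h1, h2, h3, h4⟩ := coeff_ext a b c d (w₀ - x₁) (-(x₁*w₀)) (-2*x₂) (x₂^2+y₂^2) hfact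
        exact hurwitz_of_factor (w₀ - x₁) (-(x₁*w₀)) (-2*x₂) (x₂^2+y₂^2) a b c d
          (by nlinarith) (by nlinarith) (by nlinarith) hv₂pos h1 h2 h3 h4
    · -- z₁ nonreal: divide by its real quadratic
      set x := z₁.re with hxdef
      set y := z₁.im with hydef
      have hquad1 : z₁^2 + ((-2*x : ℝ):ℂ)*z₁ + ((x^2+y^2 : ℝ):ℂ) = 0 := by
        have := self_quad z₁
        push_cast at this ⊢
        linear_combination this
      have hrem : ((c + 2*x*(b - (x^2+y^2) + 2*x*(a+2*x)) - (x^2+y^2)*(a+2*x) : ℝ):ℂ)*z₁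
          + ((d - (x^2+y^2)*(b - (x^2+y^2) + 2*x*(a+2*x)) : ℝ):ℂ) = 0 := by
        linear_combination (norm := (push_cast; ring1)) hz₁
          - (z₁^2 + ((a+2*x : ℝ):ℂ)*z₁ + ((b - (x^2+y^2) + 2*x*(a+2*x) : ℝ):ℂ)) * hquad1
      obtain ⟨hE0, hF0⟩ := lin_zero _ _ z₁ him1 hrem
      have hE0c : ((c + 2*x*(b - (x^2+y^2) + 2*x*(a+2*x)) - (x^2+y^2)*(a+2*x) : ℝ):ℂ) = 0 := by
        exact_mod_cast hE0
      have hF0c : ((d - (x^2+y^2)*(b - (x^2+y^2) + 2*x*(a+2*x)) : ℝ):ℂ) = 0 := by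
        exact_mod_cast hF0
      have hfact : ∀ w : ℂ, w^4 + (a:ℂ)*w^3 + (b:ℂ)*w^2 + (c:ℂ)*w + (d:ℂ)
          = (w^2 + ((-2*x : ℝ):ℂ)*w + ((x^2+y^2 : ℝ):ℂ))
            * (w^2 + ((a+2*x : ℝ):ℂ)*w + ((b - (x^2+y^2) + 2*x*(a+2*x) : ℝ):ℂ)) := by
        intro w
        linear_combination (norm := (push_cast; ring1)) w * hE0c + hF0c
      have hqs := quad_stable (a+2*x) (b - (x^2+y^2) + 2*x*(a+2*x)) (by
        intro w hw
        apply hstab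
        rw [hfact w, hw, mul_zero])
      have hq : 0 < x^2 + y^2 := by positivity
      obtain ⟨h1, h2, h3, h4⟩ := coeff_ext a b c d (-2*x) (x^2+y^2) _ _ hfact
      exact hurwitz_of_factor (-2*x) (x^2+y^2) _ _ a b c d
        (by nlinarith) hq hqs.1 hqs.2 h1 h2 h3 h4
  · -- reverse: Hurwitz inequality implies stability
    intro hΔ z hz
    by_contra hxneg
    push_neg at hxneg
    have hb : 0 < b := by nlinarith [sq_nonneg c, mul_pos (mul_pos ha ha) hd, mul_pos ha hc]
    by_cases him : z.im = 0
    · have hz' : z = ((z.re : ℝ) : ℂ) := Complex.ext rfl (by simp [him])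
      set x := z.re with hxdef
      have hre : x^4 + a*x^3 + b*x^2 + c*x + d = 0 := by
        have := hz
        rw [hz'] at this
        exact_mod_cast this
      nlinarith [pow_nonneg hxneg 4, pow_nonneg hxneg 3, pow_nonneg hxneg 2,
        mul_nonneg ha.le (pow_nonneg hxneg 3), mul_nonneg hb.le (pow_nonneg hxneg 2),
        mul_nonneg hc.le hxneg]
    · set x := z.re with hxdef
      set y := z.im with hydef
      have hquad : z^2 + ((-2*x : ℝ):ℂ)*z + ((x^2+y^2 : ℝ):ℂ) = 0 := by
        have := self_quad z
        push_cast at this ⊢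
        linear_combination this
      have hrem : ((c + 2*x*(b - (x^2+y^2) + 2*x*(a+2*x)) - (x^2+y^2)*(a+2*x) : ℝ):ℂ)*z
          + ((d - (x^2+y^2)*(b - (x^2+y^2) + 2*x*(a+2*x)) : ℝ):ℂ) = 0 := by
        linear_combination (norm := (push_cast; ring1)) hz
          - (z^2 + ((a+2*x : ℝ):ℂ)*z + ((b - (x^2+y^2) + 2*x*(a+2*x) : ℝ):ℂ)) * hquad
      obtain ⟨hE0, hF0⟩ := lin_zero _ _ z him hrem
      -- coefficient relations
      have hcrel : c = (-2*x)*(b - (x^2+y^2) + 2*x*(a+2*x)) + (x^2+y^2)*(a+2*x) := by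
        linarith [hE0]
      have hdrel : d = (x^2+y^2)*(b - (x^2+y^2) + 2*x*(a+2*x)) := by linarith [hF0]
      -- Hurwitz quantity is nonpositive, contradiction
      have hkey : a*b*c - c^2 - a^2*d
          = ((-2*x)*(a+2*x)) * (((x^2+y^2) - (b - (x^2+y^2) + 2*x*(a+2*x)))^2
            + a*((-2*x)*(b - (x^2+y^2) + 2*x*(a+2*x)) + (x^2+y^2)*(a+2*x))) := by
        rw [hcrel, hdrel]; ring
      have h1 : (-2*x) ≤ 0 := by linarith
      have h2 : 0 < a + 2*x := by linarith
      have h3 : 0 < ((x^2+y^2) - (b - (x^2+y^2) + 2*x*(a+2*x)))^2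
          + a*((-2*x)*(b - (x^2+y^2) + 2*x*(a+2*x)) + (x^2+y^2)*(a+2*x)) := by
        rw [← hcrel]
        positivity
      nlinarith [mul_nonpos_of_nonpos_of_nonneg (mul_nonpos_of_nonpos_of_nonneg h1 h2.le) h3.le]


/-- Ziegler's paradox: for damping `b > 0`, all complex roots of the characteristic
polynomial `2m²l⁴λ⁴ + 7bml²λ³ + (b² + ml²(7c − 2Pl))λ² + 2bcλ + c²` of the damped
Ziegler pendulum have negative real part iff `P < 41c/(28l) + b²/(2ml³)`; moreover
the vanishing-damping limit `41c/(28l)` of the critical load is strictly smaller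
than the undamped critical load `(7/2 − √2)c/l`. -/
theorem ziegler_paradox (m l c b P : ℝ)
    (hm : 0 < m) (hl : 0 < l) (hc : 0 < c) (hb : 0 < b) :
    ((∀ z : ℂ, ((2 * m ^ 2 * l ^ 4 : ℝ) : ℂ) * z ^ 4
        + ((7 * b * m * l ^ 2 : ℝ) : ℂ) * z ^ 3
        + ((b ^ 2 + m * l ^ 2 * (7 * c - 2 * P * l) : ℝ) : ℂ) * z ^ 2
        + ((2 * b * c : ℝ) : ℂ) * z + ((c ^ 2 : ℝ) : ℂ) = 0 →
      z.re < 0) ↔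
    P < 41 * c / (28 * l) + b ^ 2 / (2 * m * l ^ 3)) ∧
    41 * c / (28 * l) < (7 / 2 - Real.sqrt 2) * c / l := by
  have ha0 : (0:ℝ) < 2*m^2*l^4 := by positivity
  constructor
  · -- the stability criterion
    have hA : (0:ℝ) < 7*b*m*l^2/(2*m^2*l^4) := by positivity
    have hC : (0:ℝ) < 2*b*c/(2*m^2*l^4) := by positivity
    have hD : (0:ℝ) < c^2/(2*m^2*l^4) := by positivity
    have hiff := quartic_stable_iff (7*b*m*l^2/(2*m^2*l^4))
      ((b^2+m*l^2*(7*c-2*P*l))/(2*m^2*l^4)) (2*b*c/(2*m^2*l^4)) (c^2/(2*m^2*l^4)) hA hC hD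
    have hne : ((2*m^2*l^4 : ℝ):ℂ) ≠ 0 := by
      exact_mod_cast ha0.ne'
    have hroots : (∀ z : ℂ, ((2 * m ^ 2 * l ^ 4 : ℝ) : ℂ) * z ^ 4
        + ((7 * b * m * l ^ 2 : ℝ) : ℂ) * z ^ 3
        + ((b ^ 2 + m * l ^ 2 * (7 * c - 2 * P * l) : ℝ) : ℂ) * z ^ 2
        + ((2 * b * c : ℝ) : ℂ) * z + ((c ^ 2 : ℝ) : ℂ) = 0 → z.re < 0) ↔
        (∀ z : ℂ, z^4 + ((7*b*m*l^2/(2*m^2*l^4) : ℝ):ℂ)*z^3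
          + (((b^2+m*l^2*(7*c-2*P*l))/(2*m^2*l^4) : ℝ):ℂ)*z^2
          + ((2*b*c/(2*m^2*l^4) : ℝ):ℂ)*z + ((c^2/(2*m^2*l^4) : ℝ):ℂ) = 0 → z.re < 0) := by
      apply forall_congr'
      intro z
      apply imp_congr_left
      have hexp : z^4 + ((7*b*m*l^2/(2*m^2*l^4) : ℝ):ℂ)*z^3
          + (((b^2+m*l^2*(7*c-2*P*l))/(2*m^2*l^4) : ℝ):ℂ)*z^2
          + ((2*b*c/(2*m^2*l^4) : ℝ):ℂ)*z + ((c^2/(2*m^2*l^4) : ℝ):ℂ)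
          = ((2*m^2*l^4 : ℝ):ℂ)⁻¹ * (((2 * m ^ 2 * l ^ 4 : ℝ) : ℂ) * z ^ 4
            + ((7 * b * m * l ^ 2 : ℝ) : ℂ) * z ^ 3
            + ((b ^ 2 + m * l ^ 2 * (7 * c - 2 * P * l) : ℝ) : ℂ) * z ^ 2
            + ((2 * b * c : ℝ) : ℂ) * z + ((c ^ 2 : ℝ) : ℂ)) := by
        push_cast
        have : ((2:ℂ)*(m:ℂ)^2*(l:ℂ)^4) ≠ 0 := by exact_mod_cast hne
        have hm' : (m:ℂ) ≠ 0 := by exact_mod_cast hm.ne'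
        have hl' : (l:ℂ) ≠ 0 := by exact_mod_cast hl.ne'
        field_simp
      rw [hexp]
      constructor
      · intro h
        rw [h, mul_zero]
      · intro h
        rcases mul_eq_zero.1 h with h' | h'
        · exact absurd h' (inv_ne_zero hne)
        · exact h'
    rw [hroots, hiff]
    -- now pure real arithmetic
    have hK : (0:ℝ) < b^2*c*m*l^2 := by positivity
    have e1 : (2*b*c/(2*m^2*l^4))^2 + (7*b*m*l^2/(2*m^2*l^4))^2*(c^2/(2*m^2*l^4))
        = (b^2*c*m*l^2*(57*c*m*l^2))/(2*m^2*l^4)^3 := by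
      field_simp
      ring
    have e2 : (7*b*m*l^2/(2*m^2*l^4))*((b^2+m*l^2*(7*c-2*P*l))/(2*m^2*l^4))*(2*b*c/(2*m^2*l^4))
        = (b^2*c*m*l^2*(14*(b^2+m*l^2*(7*c-2*P*l))))/(2*m^2*l^4)^3 := by
      field_simp
      ring
    rw [e1, e2, div_lt_div_iff_of_pos_right (by positivity), mul_lt_mul_iff_right₀ hK]
    have e3 : 41 * c / (28 * l) + b ^ 2 / (2 * m * l ^ 3)
        = (41*c*m*l^2 + 14*b^2)/(28*m*l^3) := by
      field_simp
      ring
    rw [e3, lt_div_iff₀ (by positivity)]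
    constructor
    · intro h
      nlinarith [h, hm, hl, hc]
    · intro h
      nlinarith [h, hm, hl, hc]
  · -- Ziegler's paradox inequality
    have hs : Real.sqrt 2 < 57/28 := by
      nlinarith [Real.sqrt_nonneg 2, Real.sq_sqrt (by norm_num : (0:ℝ) ≤ 2)]
    rw [div_lt_div_iff₀ (by positivity) hl]
    nlinarith [hs, mul_pos hc hl]
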